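/- arXiv:2209.10646 — 4 statements merged into one kernel-verified Lean document; each statement's English description precedes it below -/
import Mathlib

section
/- Let b ≥ 2 be an integer and let p be a prime dividing Φ_b(2), the b-th cyclotomic polynomial evaluated at 2. Then either p is the largest prime divisor of b, or the multiplicative order of 2 modulo p equals b. -/
theorem prime_divisor_of_cyclotomic_two (b : ℕ) (hb : 2 ≤ b)
    (p : ℕ) (hp : p.Prime) (hdvd : (p : ℤ) ∣ (Polynomial.cyclotomic b ℤ).eval 2) :
    (p ∣ b ∧ ∀ q : ℕ, q.Prime → q ∣ b → q ≤ p) ∨ orderOf (2 : ZMod p) = b := by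
  haveI : Fact p.Prime := ⟨hp⟩
  have hb0 : b ≠ 0 := by omega
  -- 2 is a root of cyclotomic b over ZMod p
  have hroot : (Polynomial.cyclotomic b (ZMod p)).IsRoot 2 := by
    have h1 : (((Polynomial.cyclotomic b ℤ).eval 2 : ℤ) : ZMod p) = 0 := by
      rw [ZMod.intCast_zmod_eq_zero_iff_dvd]; exact hdvd
    have h2 := Polynomial.eval_intCast_map (Int.castRingHom (ZMod p))
      (Polynomial.cyclotomic b ℤ) 2
    rw [Polynomial.map_cyclotomic_int] at h2
    rw [Polynomial.IsRoot.def]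
    have h3 : ((2 : ℤ) : ZMod p) = 2 := by push_cast; ring
    rw [h3] at h2
    rw [h2]
    exact_mod_cast h1
  by_cases hpb : p ∣ b
  · left
    refine ⟨hpb, fun q hq hqb => ?_⟩
    set k := b.factorization p with hk
    set m := b / p ^ k with hm
    have hbk : p ^ k * m = b := Nat.ordProj_mul_ordCompl_eq_self b p
    have hpm : ¬ p ∣ m := Nat.not_dvd_ordCompl hp hb0
    haveI : NeZero (m : ZMod p) := by
      refine ⟨fun h => hpm ?_⟩
      rwa [ZMod.natCast_eq_zero_iff] at h
    have hprim : IsPrimitiveRoot (2 : ZMod p) m := by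
      rw [← hbk] at hroot
      exact (Polynomial.isRoot_cyclotomic_prime_pow_mul_iff_of_charP).mp hroot
    have hm0 : 0 < m := Nat.ordCompl_pos p hb0
    have hord : orderOf (2 : ZMod p) = m := (hprim.eq_orderOf).symm
    -- 2 ≠ 0 in ZMod p, so order divides p - 1
    have h2ne : (2 : ZMod p) ≠ 0 := by
      intro h
      have := hprim.pow_eq_one
      rw [h, zero_pow hm0.ne'] at this
      exact zero_ne_one this
    have hdvd' : m ∣ p - 1 := by
      rw [← hord]
      exact orderOf_dvd_of_pow_eq_one (ZMod.pow_card_sub_one_eq_one h2ne)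
    have hp3 : 3 ≤ p := by
      by_contra h
      have hp2 : p = 2 := by have := hp.two_le; omega
      apply h2ne
      have h0 : (2 : ZMod p) = ((2 : ℕ) : ZMod p) := by push_cast; ring
      rw [h0, ← hp2, ZMod.natCast_self]
    rcases eq_or_ne q p with rfl | hqp
    · exact le_refl _
    · have hqm : q ∣ m := by
        rw [← hbk] at hqb
        rcases (Nat.Prime.dvd_mul hq).mp hqb with h | h
        · exact absurd ((Nat.prime_dvd_prime_iff_eq hq hp).mp (hq.dvd_of_dvd_pow h)) hqp
        · exact h
      have : q ≤ m := Nat.le_of_dvd hm0 hqm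
      have : m ≤ p - 1 := Nat.le_of_dvd (by omega) hdvd'
      omega
  · right
    haveI : NeZero (b : ZMod p) := by
      refine ⟨fun h => hpb ?_⟩
      rwa [ZMod.natCast_eq_zero_iff] at h
    have hprim : IsPrimitiveRoot (2 : ZMod p) b :=
      (Polynomial.isRoot_cyclotomic_iff).mp hroot
    exact hprim.eq_orderOf.symm
end

section
/- Every integer n with n ≡ 2 (mod 8) satisfies at least one of the following congruences: n ≡ 2 (mod 16), n ≡ 10 (mod 48), n ≡ 26 (mod 96), n ≡ 74 (mod 288), n ≡ 170 (mod 288), n ≡ 266 (mod 288), n ≡ 42 (mod 144), n ≡ 90 (mod 144), n ≡ 138 (mod 432), n ≡ 282 (mod 432), n ≡ 426 (mod 432). -/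
theorem covering_2_mod_8 (n : ℤ) (hn : n ≡ 2 [ZMOD 8]) :
    n ≡ 2 [ZMOD 16] ∨ n ≡ 10 [ZMOD 48] ∨ n ≡ 26 [ZMOD 96] ∨
    n ≡ 74 [ZMOD 288] ∨ n ≡ 170 [ZMOD 288] ∨ n ≡ 266 [ZMOD 288] ∨
    n ≡ 42 [ZMOD 144] ∨ n ≡ 90 [ZMOD 144] ∨
    n ≡ 138 [ZMOD 432] ∨ n ≡ 282 [ZMOD 432] ∨ n ≡ 426 [ZMOD 432] := by
  simp only [Int.ModEq] at hn ⊢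
  omega
end

section
/- Let C be a finite set of congruence classes a_i (mod b_i), let w be a positive integer, and for each u ∈ {0, 1, ..., w−1} let C_u be the subset of classes in C with a_i ≡ u (mod gcd(b_i, w)). Suppose each C_u is nonempty; let ℓ'_u be the lcm of the moduli in C_u and d_u = gcd(w, ℓ'_u). If for each u ∈ {0, ..., w−1}, every integer of the form wt + u with t ∈ {0, 1, ..., (ℓ'_u/d_u) − 1} satisfies some congruence class in C_u, then C is a covering system. -/
theorem covering_verification_lemma (m : ℕ) (a : Fin m → ℤ) (b : Fin m → ℕ)
    (hb : ∀ i, 0 < b i) (w : ℕ) (hw : 0 < w)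
    (Cu : ℕ → Finset (Fin m))
    (hCu : ∀ u : ℕ, ∀ i : Fin m,
      i ∈ Cu u ↔ a i ≡ (u : ℤ) [ZMOD (Nat.gcd (b i) w : ℤ)])
    (hne : ∀ u < w, (Cu u).Nonempty)
    (hcov : ∀ u < w, ∀ t : ℕ, t < (Cu u).lcm b / Nat.gcd w ((Cu u).lcm b) →
      ∃ i ∈ Cu u, ((w * t + u : ℕ) : ℤ) ≡ a i [ZMOD (b i : ℤ)]) :
    ∀ n : ℤ, ∃ i, n ≡ a i [ZMOD (b i : ℤ)] := by
  intro n
  have hwz : (0 : ℤ) < (w : ℤ) := by exact_mod_cast hw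
  set u : ℕ := (n % w).toNat with hu_def
  have hmod_nonneg : 0 ≤ n % (w : ℤ) := Int.emod_nonneg n (ne_of_gt hwz)
  have hmod_lt : n % (w : ℤ) < w := Int.emod_lt_of_pos n hwz
  have huz : (u : ℤ) = n % w := Int.toNat_of_nonneg hmod_nonneg
  have hu : u < w := by
    have := hmod_lt; omega
  -- n - u is divisible by w
  have hdvd : (w : ℤ) ∣ n - u := by
    rw [huz]; exact Int.dvd_self_sub_of_emod_eq rfl
  obtain ⟨s, hs⟩ := hdvd
  set ℓ : ℕ := (Cu u).lcm b with hℓ_def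
  have hℓpos : 0 < ℓ := by
    obtain ⟨j, hj⟩ := hne u hu
    rcases Nat.eq_zero_or_pos ℓ with h0 | h
    · exfalso
      rw [hℓ_def, Finset.lcm_eq_zero_iff] at h0
      obtain ⟨j', hj', hj0⟩ := by simpa using h0
      have := hb j'; omega
    · exact h
  set d : ℕ := Nat.gcd w ℓ with hd_def
  have hdpos : 0 < d := Nat.gcd_pos_of_pos_left ℓ hw
  set q : ℕ := ℓ / d with hq_def
  have hqpos : 0 < q := Nat.div_pos (Nat.le_of_dvd hℓpos (Nat.gcd_dvd_right w ℓ)) hdpos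
  have hqz : (0 : ℤ) < (q : ℤ) := by exact_mod_cast hqpos
  set t : ℕ := (s % q).toNat with ht_def
  have htz : (t : ℤ) = s % q := Int.toNat_of_nonneg (Int.emod_nonneg s (ne_of_gt hqz))
  have ht : t < q := by
    have := Int.emod_lt_of_pos s hqz
    omega
  obtain ⟨i, hi, hcong⟩ := hcov u hu t ht
  refine ⟨i, ?_⟩
  -- ℓ divides w * q
  have hℓ_dvd_wq : ℓ ∣ w * q := by
    obtain ⟨w', hw'⟩ := Nat.gcd_dvd_left w ℓ
    have hdl : d ∣ ℓ := Nat.gcd_dvd_right w ℓ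
    calc ℓ ∣ w' * ℓ := dvd_mul_left ℓ w'
      _ = w * q := by
          rw [hw', hq_def, ← hd_def, Nat.mul_assoc, Nat.mul_left_comm,
            Nat.mul_div_cancel' hdl]
  -- n ≡ w*t+u [ZMOD ℓ]
  have key : (ℓ : ℤ) ∣ ((w * t + u : ℕ) : ℤ) - n := by
    have h1 : ((w * t + u : ℕ) : ℤ) - n = (w : ℤ) * ((t : ℤ) - s) := by
      push_cast
      linarith [hs]
    have h2 : (t : ℤ) - s = -((q : ℤ) * (s / q)) := by
      rw [htz]
      have := Int.emod_add_mul_ediv s q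
      linarith
    rw [h1, h2]
    have : ((w : ℤ) * (q : ℤ)) ∣ (w : ℤ) * -((q : ℤ) * (s / q)) := ⟨-(s / q), by ring⟩
    exact dvd_trans (by exact_mod_cast Int.natCast_dvd_natCast.mpr hℓ_dvd_wq) this
  have hbi : (b i : ℤ) ∣ (ℓ : ℤ) := Int.natCast_dvd_natCast.mpr (Finset.dvd_lcm hi)
  have hmodeq : n ≡ ((w * t + u : ℕ) : ℤ) [ZMOD (b i : ℤ)] :=
    Int.modEq_iff_dvd.mpr (dvd_trans hbi key)
  exact hmodeq.trans hcong
end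

section
/- Let b ≥ 2, A, B, v be positive integers and ℓ ≥ 2 an integer with b^ℓ > A + B. Set A₀ = b^{ℓ(v+2)}·A and B₀ = b^{ℓ(v+1)} − b^ℓ + B. Then for every nonnegative integer m, every integer k ≥ ℓ(v+1), and every d with 1 ≤ |d| ≤ b − 1, the number A₀m + B₀ + d·b^k is congruent to B − b^ℓ modulo b^{2ℓ}, and in particular its absolute value is not equal to any prime p ≤ A. -/
theorem large_k_congruence (b A B v : ℕ) (hb : 2 ≤ b) (hA : 0 < A) (hB : 0 < B)
    (hv : 0 < v) (ℓ : ℕ) (hℓ : 2 ≤ ℓ) (hbig : (A : ℤ) + B < (b : ℤ) ^ ℓ)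
    (m k : ℕ) (hk : ℓ * (v + 1) ≤ k)
    (d : ℤ) (hd1 : 1 ≤ |d|) (hd2 : |d| ≤ (b : ℤ) - 1) :
    (((b : ℤ) ^ (ℓ * (v + 2)) * A) * m + ((b : ℤ) ^ (ℓ * (v + 1)) - (b : ℤ) ^ ℓ + B)
        + d * (b : ℤ) ^ k) ≡ ((B : ℤ) - (b : ℤ) ^ ℓ) [ZMOD ((b : ℤ) ^ (2 * ℓ))] ∧
    ∀ p : ℕ, p.Prime → p ≤ A →
      |((b : ℤ) ^ (ℓ * (v + 2)) * A) * m + ((b : ℤ) ^ (ℓ * (v + 1)) - (b : ℤ) ^ ℓ + B)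
        + d * (b : ℤ) ^ k| ≠ (p : ℤ) := by
  set N : ℤ := ((b : ℤ) ^ (ℓ * (v + 2)) * A) * m + ((b : ℤ) ^ (ℓ * (v + 1)) - (b : ℤ) ^ ℓ + B)
      + d * (b : ℤ) ^ k with hN
  have hb1 : (2:ℤ) ≤ (b:ℤ) := by exact_mod_cast hb
  have he2 : (2:ℤ) ≤ (b:ℤ)^ℓ := le_trans hb1 (le_self_pow₀ (by linarith) (by omega))
  have hdvd : ((b:ℤ)^(2*ℓ)) ∣ (N - ((B:ℤ) - (b:ℤ)^ℓ)) := by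
    have h1 : (b:ℤ)^(2*ℓ) ∣ (b:ℤ)^(ℓ*(v+2)) := pow_dvd_pow _ (by nlinarith)
    have h2 : (b:ℤ)^(2*ℓ) ∣ (b:ℤ)^(ℓ*(v+1)) := pow_dvd_pow _ (by nlinarith)
    have h3 : (b:ℤ)^(2*ℓ) ∣ (b:ℤ)^k := pow_dvd_pow _ (by nlinarith)
    have heq : N - ((B:ℤ) - (b:ℤ)^ℓ)
        = (b:ℤ)^(ℓ*(v+2)) * A * m + (b:ℤ)^(ℓ*(v+1)) + d * (b:ℤ)^k := by
      rw [hN]; ring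
    rw [heq]
    exact dvd_add (dvd_add ((h1.mul_right _).mul_right _) h2) (h3.mul_left d)
  have hpow : ((b:ℤ)^(2*ℓ)) = ((b:ℤ)^ℓ)^2 := by
    rw [← pow_mul, mul_comm]
  constructor
  · exact (Int.modEq_iff_dvd.mpr hdvd).symm
  · intro p hp hpA habs
    have hp2 : (2:ℤ) ≤ (p:ℤ) := by exact_mod_cast hp.two_le
    have hpA' : (p:ℤ) ≤ (A:ℤ) := by exact_mod_cast hpA
    have hB1 : (1:ℤ) ≤ (B:ℤ) := by exact_mod_cast hB
    have hsq : ((b:ℤ)^ℓ)^2 ∣ (N - ((B:ℤ) - (b:ℤ)^ℓ)) := hpow ▸ hdvd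
    have hcases : N = (p:ℤ) ∨ N = -(p:ℤ) := abs_eq (by positivity) |>.mp habs
    have hA1 : (1:ℤ) ≤ (A:ℤ) := by exact_mod_cast hA
    set e : ℤ := (b:ℤ)^ℓ with he
    have hee : 2*e ≤ e^2 := by nlinarith
    have hbound : 0 < N - ((B:ℤ) - e) ∧ N - ((B:ℤ) - e) < e^2 := by
      rcases hcases with h | h <;> rw [h] <;> constructor <;> linarith
    have := Int.le_of_dvd hbound.1 hsq
    linarith [hbound.2]
end
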